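/- arXiv:1502.00153 — 2 statements merged into one kernel-verified Lean document; each statement's English description precedes it below -/
import Mathlib

section
/- Let X be a compact metric space and g : X → X a continuous map. For every finite open cover λ of X and every n ∈ ℕ, the topological conditional entropy satisfies h(g^n | λ_g^n) ≤ n · h(g | λ), where λ_g^n = { A₀ ∩ g⁻¹(A₁) ∩ ⋯ ∩ g^{-(n-1)}(A_{n-1}) : A₀,…,A_{n-1} ∈ λ }. In particular, if g is h-expansive, then g^n is h-expansive for each n ∈ ℕ. -/
open Set Filter

/-- `ξ` is an open cover of the whole space. -/
def IsOpenCoverOf {X : Type*} [TopologicalSpace X] (ξ : Set (Set X)) : Prop :=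
  (∀ A ∈ ξ, IsOpen A) ∧ ⋃₀ ξ = Set.univ

/-- The join `λ_g^n = ⋁_{k=0}^{n-1} g^{-k}(λ)`, consisting of all sets
`A₀ ∩ g⁻¹(A₁) ∩ ⋯ ∩ g^{-(n-1)}(A_{n-1})` with `A₀, …, A_{n-1} ∈ λ`. -/
def coverJoin {X : Type*} (g : X → X) (n : ℕ) (ξ : Set (Set X)) : Set (Set X) :=
  {B | ∃ A : ℕ → Set X, (∀ k < n, A k ∈ ξ) ∧ B = ⋂ k ∈ Finset.range n, g^[k] ⁻¹' A k}

/-- The minimal number of members of `ξ` needed to cover `B`. -/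
noncomputable def covNum {X : Type*} (ξ : Set (Set X)) (B : Set X) : ℕ :=
  sInf {m : ℕ | ∃ F : Finset (Set X), ↑F ⊆ ξ ∧ F.card = m ∧ B ⊆ ⋃₀ ↑F}

/-- `H(ξ | η)`: the logarithm of the maximal, over `B ∈ η`, minimal number of members
of `ξ` needed to cover a single member `B` of `η`. -/
noncomputable def covH {X : Type*} (ξ η : Set (Set X)) : ℝ :=
  Real.log (sSup ((fun B => (covNum ξ B : ℝ)) '' η))

/-- The topological conditional entropy `h(g | λ)` of `g` given an open cover `λ`:
`h(g | λ) = sup_ξ limsup_{n → ∞} (1/n) H(ξ_g^n | λ_g^n)`, the supremum over all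
open covers `ξ` of the space. -/
noncomputable def topCondEntropy {X : Type*} [TopologicalSpace X] (g : X → X)
    (lam : Set (Set X)) : EReal :=
  ⨆ (ξ : Set (Set X)) (_ : IsOpenCoverOf ξ),
    Filter.limsup
      (fun n : ℕ => ((covH (coverJoin g n ξ) (coverJoin g n lam) / n : ℝ) : EReal))
      Filter.atTop

/-- `g` is h-expansive if there is a finite open cover `λ` with `h(g | λ) = 0`. -/
def HExpansive {X : Type*} [TopologicalSpace X] (g : X → X) : Prop :=
  ∃ lam : Set (Set X), lam.Finite ∧ IsOpenCoverOf lam ∧ topCondEntropy g lam = 0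

/-!
The join of `ξ` over `n * m` steps of `g` refines the join of `ξ` over `m` steps of `g^n`, while
`(λ_g^n)_{g^n}^m = λ_g^{nm}`. Hence `H(ξ_{g^n}^m | (λ_g^n)_{g^n}^m) ≤ H(ξ_g^{nm} | λ_g^{nm})`;
dividing by `m` turns the right side into `n` times the `nm`-th term of the sequence defining
`h(g | λ)`, and a limsup along the subsequence `nm` is at most the full limsup.
-/

theorem Real.sSup_natCast_image (T : Set ℕ) : sSup ((↑) '' T : Set ℝ) = ((sSup T : ℕ) : ℝ) := by
  rcases T.eq_empty_or_nonempty with rfl | hne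
  · simp
  by_cases hbdd : BddAbove T
  · refine IsGreatest.csSup_eq ⟨mem_image_of_mem _ (Nat.sSup_mem hne hbdd), ?_⟩
    rintro _ ⟨k, hk, rfl⟩
    exact_mod_cast le_csSup hbdd hk
  · -- both suprema take the junk value `0`
    rw [Nat.sSup_of_not_bddAbove hbdd, Nat.cast_zero, Real.sSup_of_not_bddAbove]
    rintro ⟨b, hb⟩
    exact hbdd ⟨⌈b⌉₊, fun k hk =>
      Nat.cast_le.1 ((hb (mem_image_of_mem _ hk)).trans (Nat.le_ceil b))⟩

section Covers

variable {X : Type*}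

def Refines (ξ η : Set (Set X)) : Prop :=
  ∀ C ∈ ξ, ∃ C' ∈ η, C ⊆ C'

theorem covH_eq_log_sSup (ξ η : Set (Set X)) :
    covH ξ η = Real.log ((sSup (covNum ξ '' η) : ℕ) : ℝ) := by
  rw [covH, ← Real.sSup_natCast_image, image_image]

theorem covH_nonneg (ξ η : Set (Set X)) : 0 ≤ covH ξ η := by
  rw [covH_eq_log_sSup]
  exact Real.log_natCast_nonneg _

theorem covH_le_covH {ξ₁ ξ₂ η : Set (Set X)} (hle : ∀ B ∈ η, covNum ξ₂ B ≤ covNum ξ₁ B)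
    (hbdd : BddAbove (covNum ξ₁ '' η)) : covH ξ₂ η ≤ covH ξ₁ η := by
  have hsSup : sSup (covNum ξ₂ '' η) ≤ sSup (covNum ξ₁ '' η) := by
    refine csSup_le' ?_
    rintro _ ⟨B, hB, rfl⟩
    exact (hle B hB).trans (le_csSup hbdd ⟨B, hB, rfl⟩)
  rw [covH_eq_log_sSup, covH_eq_log_sSup]
  rcases (sSup (covNum ξ₂ '' η)).eq_zero_or_pos with h0 | hpos
  · rw [h0, Nat.cast_zero, Real.log_zero]
    exact Real.log_natCast_nonneg _
  · exact Real.log_le_log (by exact_mod_cast hpos) (by exact_mod_cast hsSup)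

theorem covNum_le_card {ξ : Set (Set X)} {B : Set X} {F : Finset (Set X)}
    (hF : ↑F ⊆ ξ) (hB : B ⊆ ⋃₀ ↑F) : covNum ξ B ≤ F.card :=
  Nat.sInf_le ⟨F, hF, rfl, hB⟩

theorem exists_finset_card_eq_covNum {ξ : Set (Set X)} {B : Set X} {F : Finset (Set X)}
    (hF : ↑F ⊆ ξ) (hB : B ⊆ ⋃₀ ↑F) :
    ∃ F' : Finset (Set X), ↑F' ⊆ ξ ∧ F'.card = covNum ξ B ∧ B ⊆ ⋃₀ ↑F' := by
  exact Nat.sInf_mem (s := {m | ∃ F' : Finset (Set X), ↑F' ⊆ ξ ∧ F'.card = m ∧ B ⊆ ⋃₀ ↑F'})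
    ⟨F.card, F, hF, rfl, hB⟩

theorem covNum_le_of_refines {ξ₁ ξ₂ : Set (Set X)} {B : Set X} {F : Finset (Set X)}
    (href : Refines ξ₁ ξ₂) (hF : ↑F ⊆ ξ₁) (hB : B ⊆ ⋃₀ ↑F) : covNum ξ₂ B ≤ covNum ξ₁ B := by
  classical
  obtain ⟨F', hF', hcard, hB'⟩ := exists_finset_card_eq_covNum hF hB
  choose! f hfmem hfsub using href
  refine hcard ▸ (covNum_le_card (F := F'.image f) ?_ ?_).trans Finset.card_image_le
  · rintro _ hD
    obtain ⟨C, hC, rfl⟩ := Finset.mem_image.1 hD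
    exact hfmem C (hF' hC)
  · intro x hx
    obtain ⟨C, hC, hxC⟩ := hB' hx
    exact ⟨f C, Finset.mem_image_of_mem f hC, hfsub C (hF' hC) hxC⟩

theorem covH_le_of_refines {ξ₁ ξ₂ η : Set (Set X)} {F : Finset (Set X)}
    (href : Refines ξ₁ ξ₂) (hF : ↑F ⊆ ξ₁) (hFcov : ⋃₀ (F : Set (Set X)) = univ) :
    covH ξ₂ η ≤ covH ξ₁ η := by
  have hB : ∀ B : Set X, B ⊆ ⋃₀ ↑F := fun B => hFcov ▸ subset_univ B
  refine covH_le_covH (fun B _ => covNum_le_of_refines href hF (hB B)) ⟨F.card, ?_⟩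
  rintro _ ⟨B, _, rfl⟩
  exact covNum_le_card hF (hB B)

theorem IsOpenCoverOf.exists_finset_subcover [TopologicalSpace X] [CompactSpace X]
    {ξ : Set (Set X)} (h : IsOpenCoverOf ξ) :
    ∃ F : Finset (Set X), ↑F ⊆ ξ ∧ ⋃₀ (F : Set (Set X)) = univ := by
  obtain ⟨F, hFξ, hFfin, hcov⟩ := isCompact_univ.elim_finite_subcover_image h.1
    (by rw [← sUnion_eq_biUnion, h.2])
  refine ⟨hFfin.toFinset, by simpa using hFξ, univ_subset_iff.1 ?_⟩
  simpa [sUnion_eq_biUnion] using hcov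

end Covers

section Joins

variable {X : Type*}

theorem IsOpenCoverOf.coverJoin [TopologicalSpace X] {g : X → X} (hg : Continuous g)
    {ξ : Set (Set X)} (h : IsOpenCoverOf ξ) (N : ℕ) : IsOpenCoverOf (coverJoin g N ξ) := by
  refine ⟨?_, eq_univ_of_forall fun x => ?_⟩
  · rintro _ ⟨A, hA, rfl⟩
    exact isOpen_biInter_finset fun k hk =>
      (h.1 _ (hA k (Finset.mem_range.1 hk))).preimage (hg.iterate k)
  · choose A hAξ hA using fun y : X => mem_sUnion.1 (h.2 ▸ mem_univ y)
    refine ⟨_, ⟨fun k => A (g^[k] x), fun k _ => hAξ _, rfl⟩, ?_⟩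
    simp only [mem_iInter, mem_preimage]
    exact fun k _ => hA _

theorem Set.Finite.coverJoin {ξ : Set (Set X)} (h : ξ.Finite) (g : X → X) (N : ℕ) :
    (coverJoin g N ξ).Finite := by
  classical
  let join : (Fin N → Set X) → Set X :=
    fun A => ⋂ k ∈ Finset.range N, g^[k] ⁻¹' (if hk : k < N then A ⟨k, hk⟩ else ∅)
  refine ((Set.Finite.pi fun _ : Fin N => h).image join).subset ?_
  rintro _ ⟨A, hA, rfl⟩
  refine ⟨fun k => A k, fun k _ => hA k k.2, iInter₂_congr fun k hk => ?_⟩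
  rw [dif_pos (Finset.mem_range.1 hk)]

theorem iInter_range_mul_preimage_iterate (g : X → X) (n m : ℕ) (D : ℕ → Set X) :
    ⋂ i ∈ Finset.range (n * m), g^[i] ⁻¹' D i =
      ⋂ j ∈ Finset.range m, (g^[n])^[j] ⁻¹' ⋂ k ∈ Finset.range n, g^[k] ⁻¹' D (k + n * j) := by
  ext x
  simp only [mem_iInter, Finset.mem_range, mem_preimage, ← Function.iterate_mul,
    ← Function.iterate_add_apply]
  constructor
  · intro hx j hj k hk
    exact hx _ (by nlinarith)
  · intro hx i hi
    have hn : 0 < n := Nat.pos_of_mul_pos_right (Nat.zero_lt_of_lt hi)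
    have := hx (i / n) ((Nat.div_lt_iff_lt_mul hn).2 (by linarith)) (i % n) (Nat.mod_lt _ hn)
    rwa [Nat.mod_add_div] at this

theorem coverJoin_iterate_coverJoin (g : X → X) (n m : ℕ) (ξ : Set (Set X)) :
    coverJoin (g^[n]) m (coverJoin g n ξ) = coverJoin g (n * m) ξ := by
  ext B
  constructor
  · rintro ⟨A, hA, rfl⟩
    choose! C hCξ hC using hA
    refine ⟨fun i => C (i / n) (i % n), fun i hi => ?_, ?_⟩
    · have hn : 0 < n := Nat.pos_of_mul_pos_right (Nat.zero_lt_of_lt hi)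
      exact hCξ _ ((Nat.div_lt_iff_lt_mul hn).2 (by linarith)) _ (Nat.mod_lt _ hn)
    · rw [iInter_range_mul_preimage_iterate]
      refine iInter₂_congr fun j hj => ?_
      rw [hC j (Finset.mem_range.1 hj)]
      refine congrArg _ (iInter₂_congr fun k hk => ?_)
      have hk : k < n := Finset.mem_range.1 hk
      rw [Nat.add_mul_div_left _ _ (by omega), Nat.div_eq_of_lt hk, zero_add,
        Nat.add_mul_mod_self_left, Nat.mod_eq_of_lt hk]
  · rintro ⟨D, hD, rfl⟩
    rw [iInter_range_mul_preimage_iterate]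
    refine ⟨_, fun j hj => ⟨fun k => D (k + n * j), fun k hk => hD _ ?_, rfl⟩, rfl⟩
    nlinarith

theorem refines_coverJoin_mul (g : X → X) {n : ℕ} (hn : 0 < n) (m : ℕ) (ξ : Set (Set X)) :
    Refines (coverJoin g (n * m) ξ) (coverJoin (g^[n]) m ξ) := by
  rintro _ ⟨D, hD, rfl⟩
  refine ⟨_, ⟨fun j => D (n * j), fun j hj => hD _ ((Nat.mul_lt_mul_left hn).2 hj), rfl⟩, ?_⟩
  rw [iInter_range_mul_preimage_iterate]
  refine iInter₂_mono fun j _ => preimage_mono fun x hx => ?_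
  simpa using mem_iInter₂.1 hx 0 (Finset.mem_range.2 hn)

end Joins

section Entropy

variable {X : Type*} [TopologicalSpace X]

theorem topCondEntropy_nonneg (g : X → X) (lam : Set (Set X)) : 0 ≤ topCondEntropy g lam := by
  have huniv : IsOpenCoverOf ({univ} : Set (Set X)) := ⟨by simp, by simp⟩
  refine le_trans ?_ (le_iSup₂_of_le {univ} huniv le_rfl)
  exact le_limsup_of_frequently_le (Frequently.of_forall fun N =>
    EReal.coe_nonneg.2 (div_nonneg (covH_nonneg _ _) N.cast_nonneg))

theorem covH_coverJoin_iterate_le [CompactSpace X] {g : X → X} (hg : Continuous g)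
    {ξ : Set (Set X)} (hξ : IsOpenCoverOf ξ) (lam : Set (Set X)) {n : ℕ} (hn : 0 < n) (m : ℕ) :
    covH (coverJoin (g^[n]) m ξ) (coverJoin (g^[n]) m (coverJoin g n lam)) ≤
      covH (coverJoin g (n * m) ξ) (coverJoin g (n * m) lam) := by
  obtain ⟨F, hF, hFcov⟩ := (hξ.coverJoin hg (n * m)).exists_finset_subcover
  rw [coverJoin_iterate_coverJoin]
  exact covH_le_of_refines (refines_coverJoin_mul g hn m ξ) hF hFcov

theorem topCondEntropy_iterate_coverJoin_le [CompactSpace X] {g : X → X} (hg : Continuous g)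
    (lam : Set (Set X)) {n : ℕ} (hn : 0 < n) :
    topCondEntropy (g^[n]) (coverJoin g n lam) ≤ n * topCondEntropy g lam := by
  refine iSup₂_le fun ξ hξ => ?_
  set a : ℕ → EReal := fun N => ((covH (coverJoin g N ξ) (coverJoin g N lam) / N : ℝ) : EReal)
  have hstep : ∀ m : ℕ,
      ((covH (coverJoin (g^[n]) m ξ) (coverJoin (g^[n]) m (coverJoin g n lam)) / m : ℝ) : EReal)
        ≤ n * a (n * m) := by
    intro m
    rw [← EReal.coe_coe_eq_natCast, ← EReal.coe_mul, EReal.coe_le_coe_iff, Nat.cast_mul,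
      mul_div_assoc', mul_div_mul_left _ _ (by positivity)]
    exact div_le_div_of_nonneg_right (covH_coverJoin_iterate_le hg hξ lam hn m) m.cast_nonneg
  have hsubseq : limsup (fun m => a (n * m)) atTop ≤ limsup a atTop :=
    limsup_le_limsup_of_le (tendsto_id.const_mul_atTop' hn)
  calc _ ≤ limsup (fun m => (n : EReal) * a (n * m)) atTop :=
        limsup_le_limsup (Eventually.of_forall hstep)
    _ = n * limsup (fun m => a (n * m)) atTop :=
        EReal.limsup_const_mul_of_nonneg_of_ne_top (by positivity) (EReal.natCast_ne_top n)
    _ ≤ n * topCondEntropy g lam :=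
        mul_le_mul_of_nonneg_left (hsubseq.trans (le_iSup₂_of_le ξ hξ le_rfl)) (by positivity)

end Entropy

theorem hExpansive_iterate_general {X : Type*} [MetricSpace X] [CompactSpace X]
    (g : X → X) (hg : Continuous g)
    (lam : Set (Set X))
    (n : ℕ) (hn : 0 < n) :
    topCondEntropy (g^[n]) (coverJoin g n lam) ≤ (n : EReal) * topCondEntropy g lam ∧
      (HExpansive g → HExpansive (g^[n])) := by
  refine ⟨topCondEntropy_iterate_coverJoin_le hg lam hn, ?_⟩
  rintro ⟨lam', hfin, hcov, hzero⟩
  refine ⟨coverJoin g n lam', hfin.coverJoin g n, hcov.coverJoin hg n,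
    le_antisymm ?_ (topCondEntropy_nonneg _ _)⟩
  simpa [hzero] using topCondEntropy_iterate_coverJoin_le hg lam' hn

/-- Let `X` be a compact metric space and `g : X → X` continuous. For every finite open
cover `λ` of `X` and every `n ∈ ℕ = {1, 2, …}`, we have
`h(g^n | λ_g^n) ≤ n ⬝ h(g | λ)`. In particular, if `g` is h-expansive, then so is `g^n`. -/
theorem hExpansive_iterate {X : Type*} [MetricSpace X] [CompactSpace X]
    (g : X → X) (hg : Continuous g)
    (lam : Set (Set X)) (hlamFin : lam.Finite) (hlamCov : IsOpenCoverOf lam)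
    (n : ℕ) (hn : 0 < n) :
    topCondEntropy (g^[n]) (coverJoin g n lam) ≤ (n : EReal) * topCondEntropy g lam ∧
      (HExpansive g → HExpansive (g^[n])) :=
  hExpansive_iterate_general g hg lam n hn
end

section
/- Let (X,d) be a compact metric space and f : X → X a continuous map. Let C be the set of points x ∈ X such that f is not injective on any neighborhood of x, and assume C ≠ ∅ and C ≠ X. Then there exist a number δ₀ ∈ (0,1] and a function τ : (0,δ₀] → (0,+∞) with the following properties: (i) τ(δ) → 0 as δ → 0⁺; (ii) for each δ ∈ (0,δ₀] and each x ∈ X with d(x,C) ≥ τ(δ), the restriction of f to the open ball B_d(x,δ) is injective. (Uniform local injectivity away from the set of non-locally-injective points; for an expanding Thurston map this set C is exactly the set of critical points.) -/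
/-!
Away from `C`, say on the compact set `{x | ε ≤ d(x, C)}`, every point has a neighborhood on
which `f` is injective, so a Lebesgue number of that cover gives a radius `δ(ε) > 0` with `f`
injective on all balls of radius `δ(ε)` centered there. Inverting `ε ↦ δ(ε)` gives `τ`:
`τ(δ) = δ + inf {ε > 0 | δ is such a radius for ε}`, where adding `δ` makes `τ` positive and
puts `τ(δ)` strictly above the infimum, hence inside the (upward closed) set.
-/

open Set Metric Filter

/-- The set of points at which `f` is not injective on any neighborhood. -/
def nonLocInjSet {X : Type*} [TopologicalSpace X] (f : X → X) : Set X :=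
  {x : X | ∀ U ∈ nhds x, ¬ Set.InjOn f U}

open Topology

theorem IsCompact.exists_forall_injOn_ball {X Y : Type*} [PseudoMetricSpace X] {f : X → Y}
    {K : Set X} (hK : IsCompact K) (h : ∀ x ∈ K, ∃ U ∈ 𝓝 x, InjOn f U) :
    ∃ δ > 0, ∀ x ∈ K, InjOn f (ball x δ) := by
  obtain ⟨δ, hδ, hcover⟩ := lebesgue_number_lemma_of_metric_sUnion
    (c := {U | IsOpen U ∧ InjOn f U}) hK (fun _ hU => hU.1) fun x hx => by
      obtain ⟨U, hU, hinj⟩ := h x hx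
      obtain ⟨V, hVU, hV, hxV⟩ := _root_.mem_nhds_iff.1 hU
      exact ⟨V, ⟨hV, hinj.mono hVU⟩, hxV⟩
  refine ⟨δ, hδ, fun x hx => ?_⟩
  obtain ⟨U, hU, hxU⟩ := hcover x hx
  exact hU.2.mono hxU

theorem exists_nhds_injOn_of_notMem_nonLocInjSet {X : Type*} [TopologicalSpace X] {f : X → X}
    {x : X} (hx : x ∉ nonLocInjSet f) : ∃ U ∈ 𝓝 x, InjOn f U := by
  simpa [nonLocInjSet] using hx

theorem exists_forall_injOn_ball_of_le_infDist {X : Type*} [MetricSpace X] [CompactSpace X]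
    (f : X → X) {ε : ℝ} (hε : 0 < ε) :
    ∃ δ > 0, ∀ x, ε ≤ infDist x (nonLocInjSet f) → InjOn f (ball x δ) := by
  have hK : IsCompact {x | ε ≤ infDist x (nonLocInjSet f)} :=
    (isClosed_le continuous_const (continuous_infDist_pt _)).isCompact
  refine hK.exists_forall_injOn_ball fun x hx => exists_nhds_injOn_of_notMem_nonLocInjSet ?_
  intro hxC
  have : ε ≤ 0 := infDist_zero_of_mem hxC ▸ hx
  linarith

theorem exists_tendsto_zero_of_forall_exists_pos {P : ℝ → ℝ → Prop}
    (hmono : ∀ ⦃ε ε' δ⦄, ε ≤ ε' → P ε δ → P ε' δ)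
    (hanti : ∀ ⦃ε δ δ'⦄, δ' ≤ δ → P ε δ → P ε δ')
    (h : ∀ ε > 0, ∃ δ > 0, P ε δ) :
    ∃ δ₀ ∈ Ioc (0 : ℝ) 1, ∃ τ : ℝ → ℝ, (∀ δ ∈ Ioc 0 δ₀, 0 < τ δ) ∧
      Tendsto τ (𝓝[>] 0) (𝓝 0) ∧ ∀ δ ∈ Ioc 0 δ₀, P (τ δ) δ := by
  set S : ℝ → Set ℝ := fun δ => {ε | 0 < ε ∧ P ε δ}
  have hS_bdd (δ : ℝ) : BddBelow (S δ) := ⟨0, fun _ hε => hε.1.le⟩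
  have hS_nonneg (δ : ℝ) : 0 ≤ sInf (S δ) := Real.sInf_nonneg fun _ hε => hε.1.le
  have hS_le {ε δ : ℝ} (hε : 0 < ε) (hP : P ε δ) : sInf (S δ) ≤ ε := csInf_le (hS_bdd δ) ⟨hε, hP⟩
  obtain ⟨δ₁, hδ₁, hP₁⟩ := h 1 one_pos
  refine ⟨min δ₁ 1, ⟨lt_min hδ₁ one_pos, min_le_right _ _⟩, fun δ => δ + sInf (S δ),
    fun δ hδ => add_pos_of_pos_of_nonneg hδ.1 (hS_nonneg δ), ?_, fun δ hδ => ?_⟩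
  · refine tendsto_order.2 ⟨fun a ha => ?_, fun a ha => ?_⟩
    · filter_upwards [self_mem_nhdsWithin] with δ (hδ : 0 < δ)
      linarith [hS_nonneg δ]
    · obtain ⟨δ', hδ', hP'⟩ := h (a / 2) (half_pos ha)
      filter_upwards [Ioo_mem_nhdsGT (lt_min hδ' (half_pos ha))] with δ hδ
      have hδa : δ < a / 2 := hδ.2.trans_le (min_le_right _ _)
      have hP : P (a / 2) δ := hanti (hδ.2.le.trans (min_le_left _ _)) hP'
      linarith [hS_le (half_pos ha) hP]
  · have hne : (S δ).Nonempty := ⟨1, one_pos, hanti (hδ.2.trans (min_le_left _ _)) hP₁⟩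
    obtain ⟨ε, ⟨-, hPε⟩, hε⟩ := Real.lt_sInf_add_pos hne hδ.1
    exact hmono (by linarith) hPε

theorem uniform_local_injectivity_general {X : Type*} [MetricSpace X] [CompactSpace X]
    (f : X → X) :
    ∃ δ₀ ∈ Set.Ioc (0 : ℝ) 1, ∃ τ : ℝ → ℝ,
      (∀ δ ∈ Set.Ioc (0 : ℝ) δ₀, 0 < τ δ) ∧
      Filter.Tendsto τ (nhdsWithin 0 (Set.Ioi 0)) (nhds 0) ∧
      (∀ δ ∈ Set.Ioc (0 : ℝ) δ₀, ∀ x : X,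
        τ δ ≤ Metric.infDist x (nonLocInjSet f) → Set.InjOn f (Metric.ball x δ)) :=
  exists_tendsto_zero_of_forall_exists_pos
    (P := fun ε δ => ∀ x, ε ≤ infDist x (nonLocInjSet f) → InjOn f (ball x δ))
    (fun _ _ _ hεε' hP x hx => hP x (hεε'.trans hx))
    (fun _ _ _ hδ hP x hx => (hP x hx).mono (ball_subset_ball hδ))
    fun _ hε => exists_forall_injOn_ball_of_le_infDist f hε

/-- Uniform local injectivity away from the set `C` of non-locally-injective points:
for a continuous map `f` on a compact metric space `X`, with `C ≠ ∅` and `C ≠ X`,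
there exist `δ₀ ∈ (0,1]` and `τ : (0,δ₀] → (0,∞)` such that `τ(δ) → 0` as `δ → 0⁺`
and, for each `δ ∈ (0,δ₀]`, the map `f` is injective on every open ball of radius `δ`
centered at a point `x` with `d(x, C) ≥ τ(δ)`. -/
theorem uniform_local_injectivity {X : Type*} [MetricSpace X] [CompactSpace X]
    (f : X → X) (hf : Continuous f)
    (hCne : (nonLocInjSet f).Nonempty) (hCtop : nonLocInjSet f ≠ Set.univ) :
    ∃ δ₀ ∈ Set.Ioc (0 : ℝ) 1, ∃ τ : ℝ → ℝ,
      (∀ δ ∈ Set.Ioc (0 : ℝ) δ₀, 0 < τ δ) ∧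
      Filter.Tendsto τ (nhdsWithin 0 (Set.Ioi 0)) (nhds 0) ∧
      (∀ δ ∈ Set.Ioc (0 : ℝ) δ₀, ∀ x : X,
        τ δ ≤ Metric.infDist x (nonLocInjSet f) → Set.InjOn f (Metric.ball x δ)) :=
  uniform_local_injectivity_general f
end
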